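/- arXiv:2602.15443 — 2 statements merged into one kernel-verified Lean document; each statement's English description precedes it below -/
import Mathlib

section
/- Let A ∈ ℝ_max^{n×n} and suppose every circuit in the weighted digraph G(A) has nonpositive weight. Then for every integer k ≥ 1 and all indices i, j, one has [A^{⊗k}]_{ij} ≤ max_{1 ≤ l ≤ n} [A^{⊗l}]_{ij}; that is, the maximum weight over all paths from i to j (of any positive length) is attained by a path of length at most n. -/
open Filter Topology

/-- `E(t) = e^t` for real `t`, and `E(-∞) = 0`. -/
noncomputable def E : WithBot ℝ → ℝ :=
  WithBot.recBotCoe 0 Real.exp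

/-- The magnitude `‖x‖ = max_i E(x_i) = e^{max_i x_i}` of a tropical vector. -/
noncomputable def tnorm {n : ℕ} (x : Fin n → WithBot ℝ) : ℝ :=
  E (Finset.univ.sup x)

/-- Tropical product of a row vector and a column vector: `a ⊗ x = max_j (a_j + x_j)`. -/
noncomputable def tdot {n : ℕ} (a x : Fin n → WithBot ℝ) : WithBot ℝ :=
  Finset.univ.sup fun j => a j + x j

/-- The tropical zero vector `ε = (-∞, …, -∞)ᵀ`. -/
def botVec (n : ℕ) : Fin n → WithBot ℝ := fun _ => ⊥

/-- The row vector `a` gives a tropical linear approximation of `g` at `ε`: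
`d(g(x), a ⊗ x) / ‖x‖ → 0` as `x → ε`. -/
def IsTropLinApprox {n : ℕ} (g : (Fin n → WithBot ℝ) → WithBot ℝ)
    (a : Fin n → WithBot ℝ) : Prop :=
  ∀ η : ℝ, 0 < η → ∃ δ : ℝ, 0 < δ ∧ ∀ x : Fin n → WithBot ℝ,
    0 < tnorm x → tnorm x < δ → |E (g x) - E (tdot a x)| ≤ η * tnorm x

/-- `lam` is a (tropical) eigenvalue of `A`. -/
def IsEigenvalue {n : ℕ} (A : Fin n → Fin n → WithBot ℝ) (lam : WithBot ℝ) : Prop :=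
  ∃ x : Fin n → WithBot ℝ, x ≠ botVec n ∧ ∀ i, tdot (A i) x = lam + x i

/-- A circuit (closed walk) of length `ℓ ≥ 1` in the weighted digraph `G(A)`. -/
def IsCircuit {n : ℕ} (A : Fin n → Fin n → WithBot ℝ) (ℓ : ℕ) (c : ℕ → Fin n) : Prop :=
  1 ≤ ℓ ∧ c ℓ = c 0 ∧ ∀ k < ℓ, A (c k) (c (k + 1)) ≠ ⊥

/-- The weight of a circuit: the sum of its edge weights. -/
noncomputable def circuitWeight {n : ℕ} (A : Fin n → Fin n → WithBot ℝ)
    (ℓ : ℕ) (c : ℕ → Fin n) : WithBot ℝ :=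
  ∑ k ∈ Finset.range ℓ, A (c k) (c (k + 1))

/-- Tropical matrix product. -/
noncomputable def tmul {n : ℕ} (A B : Fin n → Fin n → WithBot ℝ) :
    Fin n → Fin n → WithBot ℝ :=
  fun i j => Finset.univ.sup fun k => A i k + B k j

/-- Tropical matrix power; `A^{⊗0}` is the tropical identity matrix. -/
noncomputable def tpow {n : ℕ} (A : Fin n → Fin n → WithBot ℝ) :
    ℕ → Fin n → Fin n → WithBot ℝ
  | 0 => fun i j => if i = j then (0 : WithBot ℝ) else ⊥
  | k + 1 => tmul (tpow A k) A

/-- `G(A)` is strongly connected (i.e. `A` is irreducible). -/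
def StronglyConnected {n : ℕ} (A : Fin n → Fin n → WithBot ℝ) : Prop :=
  ∀ i j : Fin n, ∃ (ℓ : ℕ) (c : ℕ → Fin n),
    c 0 = i ∧ c ℓ = j ∧ ∀ k < ℓ, A (c k) (c (k + 1)) ≠ ⊥

/-- Stability of the fixed point `ε` of `x ↦ f(x)`. -/
def TropStable {n : ℕ} (f : (Fin n → WithBot ℝ) → (Fin n → WithBot ℝ)) : Prop :=
  ∀ α : ℝ, 0 < α → ∃ δ : ℝ, 0 < δ ∧
    ∀ x0 : Fin n → WithBot ℝ, tnorm x0 < δ → ∀ t : ℕ, tnorm (f^[t] x0) < α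

/-- Asymptotic stability of the fixed point `ε` of `x ↦ f(x)`. -/
def TropAsymptoticallyStable {n : ℕ}
    (f : (Fin n → WithBot ℝ) → (Fin n → WithBot ℝ)) : Prop :=
  TropStable f ∧ ∃ δ' : ℝ, 0 < δ' ∧ ∀ x0 : Fin n → WithBot ℝ, tnorm x0 < δ' →
    Filter.Tendsto (fun t : ℕ => tnorm (f^[t] x0)) Filter.atTop (nhds 0)

lemma tpow_zero' {n : ℕ} (A : Fin n → Fin n → WithBot ℝ) (i j : Fin n) :
    tpow A 0 i j = if i = j then (0 : WithBot ℝ) else ⊥ := rfl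

lemma tpow_succ' {n : ℕ} (A : Fin n → Fin n → WithBot ℝ) (k : ℕ) (i j : Fin n) :
    tpow A (k+1) i j = Finset.univ.sup fun m => tpow A k i m + A m j := rfl

lemma walk_le_tpow {n : ℕ} (A : Fin n → Fin n → WithBot ℝ) :
    ∀ (k : ℕ) (p : ℕ → Fin n),
      (∑ l ∈ Finset.range k, A (p l) (p (l+1))) ≤ tpow A k (p 0) (p k) := by
  intro k
  induction k with
  | zero => intro p; simp [tpow]
  | succ k ih =>
    intro p
    rw [Finset.sum_range_succ]
    calc (∑ l ∈ Finset.range k, A (p l) (p (l+1))) + A (p k) (p (k+1))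
        ≤ tpow A k (p 0) (p k) + A (p k) (p (k+1)) := add_le_add_left (ih p) _
      _ ≤ tpow A (k+1) (p 0) (p (k+1)) := by
          rw [tpow_succ']
          exact Finset.le_sup (f := fun m => tpow A k (p 0) m + A m (p (k+1))) (Finset.mem_univ (p k))

lemma tpow_le_of_walks_aux {n : ℕ} (A : Fin n → Fin n → WithBot ℝ) (i : Fin n) :
    ∀ (k : ℕ) (j : Fin n) (c X : WithBot ℝ),
      (∀ p : ℕ → Fin n, p 0 = i → p k = j →
        (∑ l ∈ Finset.range k, A (p l) (p (l+1))) + c ≤ X) →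
      tpow A k i j + c ≤ X := by
  intro k
  induction k with
  | zero =>
    intro j c X hyp
    by_cases hij : i = j
    · subst hij
      have := hyp (fun _ => i) rfl rfl
      rw [Finset.sum_range_zero] at this
      rw [tpow_zero', if_pos rfl]
      exact this
    · rw [tpow_zero', if_neg hij, WithBot.bot_add]
      exact bot_le
  | succ k ih =>
    intro j c X hyp
    have key : ∀ m : Fin n, (tpow A k i m + A m j) + c ≤ X := by
      intro m
      rw [add_assoc]
      apply ih m (A m j + c) X
      intro p hp0 hpk
      have := hyp (fun l => if l ≤ k then p l else j)
        (by simp [Nat.zero_le]; exact hp0) (by simp)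
      rw [Finset.sum_range_succ] at this
      have e1 : (∑ l ∈ Finset.range k,
          A (if l ≤ k then p l else j) (if l + 1 ≤ k then p (l+1) else j))
          = ∑ l ∈ Finset.range k, A (p l) (p (l+1)) := by
        apply Finset.sum_congr rfl
        intro l hl
        have hl' := Finset.mem_range.mp hl
        rw [if_pos (by omega), if_pos (by omega)]
      have e2 : (if k ≤ k then p k else j) = m := by rw [if_pos le_rfl, hpk]
      have e3 : (if k + 1 ≤ k then p (k+1) else j) = j := by rw [if_neg (by omega)]
      simp only [e2, e3] at this
      rw [e1] at this
      calc (∑ l ∈ Finset.range k, A (p l) (p (l+1))) + (A m j + c)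
          = ((∑ l ∈ Finset.range k, A (p l) (p (l+1))) + A m j) + c := by rw [add_assoc]
        _ ≤ X := this
    rw [tpow_succ']
    obtain ⟨m0, _, hm0⟩ := Finset.exists_mem_eq_sup Finset.univ ⟨i, Finset.mem_univ i⟩
      (fun m => tpow A k i m + A m j)
    rw [hm0]
    exact key m0

lemma tpow_le_of_walks {n : ℕ} (A : Fin n → Fin n → WithBot ℝ) (k : ℕ) (i j : Fin n)
    (X : WithBot ℝ)
    (hyp : ∀ p : ℕ → Fin n, p 0 = i → p k = j →
      (∑ l ∈ Finset.range k, A (p l) (p (l+1))) ≤ X) :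
    tpow A k i j ≤ X := by
  have := tpow_le_of_walks_aux A i k j 0 X (fun p h0 hk => by
    rw [add_zero]; exact hyp p h0 hk)
  rwa [add_zero] at this

lemma tpow_shorten {n : ℕ} (A : Fin n → Fin n → WithBot ℝ)
    (h : ∀ (ℓ : ℕ) (c : ℕ → Fin n), IsCircuit A ℓ c → circuitWeight A ℓ c ≤ 0)
    (k : ℕ) (hk : n + 1 ≤ k) (i j : Fin n) :
    tpow A k i j ≤ (Finset.Ico 1 k).sup fun l => tpow A l i j := by
  apply tpow_le_of_walks
  intro p hp0 hpk
  by_cases hbot : ∃ l, l < k ∧ A (p l) (p (l+1)) = ⊥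
  · obtain ⟨l0, hl0k, hl0⟩ := hbot
    have : (∑ l ∈ Finset.range k, A (p l) (p (l+1))) = ⊥ := by
      rw [← Finset.add_sum_erase _ _ (Finset.mem_range.mpr hl0k), hl0, WithBot.bot_add]
    rw [this]; exact bot_le
  · push_neg at hbot
    -- pigeonhole: two equal vertices among p 0, ..., p n
    obtain ⟨x, y, hxy, hpxy⟩ := Fintype.exists_ne_map_eq_of_card_lt
      (fun t : Fin (n+1) => p t) (by simp)
    -- wlog a < b
    obtain ⟨a, b, hab, hbn, hpab⟩ : ∃ a b : ℕ, a < b ∧ b ≤ n ∧ p a = p b := by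
      rcases lt_or_gt_of_ne (fun hxyeq : (x:ℕ) = (y:ℕ) => hxy (Fin.ext hxyeq)) with hlt | hgt
      · exact ⟨x, y, hlt, Nat.lt_succ_iff.mp y.isLt, hpxy⟩
      · exact ⟨y, x, hgt, Nat.lt_succ_iff.mp x.isLt, hpxy.symm⟩
    set ℓ := b - a with hℓ
    have hℓ1 : 1 ≤ ℓ := by omega
    have haℓ : a + ℓ = b := by omega
    have hbk : b < k := by omega
    -- the circuit
    have hcirc : (∑ l ∈ Finset.range ℓ, A (p (a + l)) (p (a + l + 1))) ≤ 0 := by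
      have := h ℓ (fun l => p (a + l)) ⟨hℓ1, by simp only [haℓ, Nat.add_zero]; exact hpab.symm,
        fun l hl => hbot (a + l) (by omega)⟩
      simpa [circuitWeight, add_assoc] using this
    -- the shortened path
    set q : ℕ → Fin n := fun l => if l ≤ a then p l else p (l + ℓ) with hq
    have hq0 : q 0 = i := by simp [hq, hp0]
    have hqend : q (k - ℓ) = j := by
      have h1 : ¬ (k - ℓ ≤ a) := by omega
      have h2 : k - ℓ + ℓ = k := by omega
      simp only [hq, if_neg h1, h2, hpk]
    -- sum decompositions
    have hsplit : (∑ l ∈ Finset.range k, A (p l) (p (l+1)))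
        = (∑ l ∈ Finset.Ico 0 a, A (p l) (p (l+1)))
          + (∑ l ∈ Finset.Ico a b, A (p l) (p (l+1)))
          + (∑ l ∈ Finset.Ico b k, A (p l) (p (l+1))) := by
      rw [Finset.sum_Ico_consecutive _ (Nat.zero_le a) (le_of_lt hab),
        Finset.sum_Ico_consecutive _ (Nat.zero_le b) (le_of_lt hbk), ← Finset.range_eq_Ico]
    have hmid : (∑ l ∈ Finset.Ico a b, A (p l) (p (l+1)))
        = ∑ l ∈ Finset.range ℓ, A (p (a + l)) (p (a + l + 1)) := by
      rw [Finset.sum_Ico_eq_sum_range]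
    have hqsplit : (∑ l ∈ Finset.range (k - ℓ), A (q l) (q (l+1)))
        = (∑ l ∈ Finset.Ico 0 a, A (p l) (p (l+1)))
          + (∑ l ∈ Finset.Ico b k, A (p l) (p (l+1))) := by
      rw [Finset.range_eq_Ico, ← Finset.sum_Ico_consecutive _ (Nat.zero_le a) (by omega : a ≤ k - ℓ)]
      congr 1
      · apply Finset.sum_congr rfl
        intro l hl
        have hl' : l < a := (Finset.mem_Ico.mp hl).2
        simp only [hq, if_pos (by omega : l ≤ a), if_pos (by omega : l + 1 ≤ a)]
      · rw [Finset.sum_Ico_eq_sum_range, Finset.sum_Ico_eq_sum_range]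
        have : k - ℓ - a = k - b := by omega
        rw [this]
        apply Finset.sum_congr rfl
        intro l _
        have e1 : q (a + l) = p (b + l) := by
          rcases Nat.eq_zero_or_pos l with h0 | h0
          · subst h0; simp only [hq, Nat.add_zero, if_pos le_rfl]; rw [hpab]
          · simp only [hq, if_neg (by omega : ¬ a + l ≤ a)]
            congr 1; omega
        have e2 : q (a + l + 1) = p (b + l + 1) := by
          simp only [hq, if_neg (by omega : ¬ a + l + 1 ≤ a)]
          congr 1; omega
        rw [e1, e2]
    -- put it together
    calc (∑ l ∈ Finset.range k, A (p l) (p (l+1)))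
        = ((∑ l ∈ Finset.Ico 0 a, A (p l) (p (l+1)))
            + (∑ l ∈ Finset.Ico b k, A (p l) (p (l+1))))
          + (∑ l ∈ Finset.range ℓ, A (p (a + l)) (p (a + l + 1))) := by
          rw [hsplit, hmid, add_right_comm]
      _ ≤ ((∑ l ∈ Finset.Ico 0 a, A (p l) (p (l+1)))
            + (∑ l ∈ Finset.Ico b k, A (p l) (p (l+1)))) + 0 := add_le_add_right hcirc _
      _ = ∑ l ∈ Finset.range (k - ℓ), A (q l) (q (l+1)) := by rw [add_zero, hqsplit]
      _ ≤ tpow A (k - ℓ) (q 0) (q (k - ℓ)) := walk_le_tpow A _ q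
      _ = tpow A (k - ℓ) i j := by rw [hq0, hqend]
      _ ≤ (Finset.Ico 1 k).sup fun l => tpow A l i j := by
          refine Finset.le_sup (f := fun l => tpow A l i j) (Finset.mem_Ico.mpr ⟨?_, ?_⟩) <;> omega


/-- if every circuit of `G(A)` has nonpositive weight then for every `k ≥ 1`,
`[A^{⊗k}]_{ij} ≤ max_{1 ≤ l ≤ n} [A^{⊗l}]_{ij}`: the maximum weight over all paths from `i`
to `j` is attained by a path of length at most `n`. -/
theorem stmt_10 {n : ℕ} (A : Fin n → Fin n → WithBot ℝ)
    (h : ∀ (ℓ : ℕ) (c : ℕ → Fin n), IsCircuit A ℓ c → circuitWeight A ℓ c ≤ 0) :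
    ∀ k : ℕ, 1 ≤ k → ∀ i j : Fin n,
      tpow A k i j ≤ (Finset.Icc 1 n).sup fun l => tpow A l i j := by
  intro k
  induction k using Nat.strong_induction_on with
  | _ k ih =>
    intro hk i j
    by_cases hkn : k ≤ n
    · exact Finset.le_sup (f := fun l => tpow A l i j) (Finset.mem_Icc.mpr ⟨hk, hkn⟩)
    · have hk' : n + 1 ≤ k := by omega
      calc tpow A k i j ≤ (Finset.Ico 1 k).sup fun l => tpow A l i j :=
            tpow_shorten A h k hk' i j
        _ ≤ _ := by
            apply Finset.sup_le
            intro l hl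
            have hl' := Finset.mem_Ico.mp hl
            exact ih l hl'.2 hl'.1 i j
end

section
/- Let A ∈ ℝ_max^{n×n} and let b, p ∈ ℝ^n be finite vectors (all entries real) with p = A ⊗ p ⊕ b. Then every circuit in the weighted digraph G(A) has nonpositive weight; consequently every eigenvalue λ ∈ ℝ of A satisfies λ ≤ 0 (the maximum eigenvalue of A is nonpositive). -/
open Filter Topology

/-- if `p = A ⊗ p ⊕ b` for finite vectors `b, p ∈ ℝ^n`, then every circuit of
`G(A)` has nonpositive weight, and consequently every real eigenvalue of `A` is nonpositive. -/
theorem stmt_13 {n : ℕ} (A : Fin n → Fin n → WithBot ℝ) (b p : Fin n → ℝ)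
    (h : ∀ i : Fin n, ((p i : ℝ) : WithBot ℝ) =
        max (tdot (A i) fun j => ((p j : ℝ) : WithBot ℝ)) ((b i : ℝ) : WithBot ℝ)) :
    (∀ (ℓ : ℕ) (c : ℕ → Fin n), IsCircuit A ℓ c → circuitWeight A ℓ c ≤ 0) ∧
      ∀ lam : ℝ, IsEigenvalue A (lam : WithBot ℝ) → lam ≤ 0 := by
  have hAp : ∀ i j : Fin n, A i j + ((p j : ℝ) : WithBot ℝ) ≤ ((p i : ℝ) : WithBot ℝ) := by
    intro i j
    have h1 : tdot (A i) (fun j => ((p j : ℝ) : WithBot ℝ)) ≤ ((p i : ℝ) : WithBot ℝ) := by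
      rw [h i]; exact le_max_left _ _
    exact le_trans (Finset.le_sup (f := fun j => A i j + ((p j : ℝ) : WithBot ℝ)) (Finset.mem_univ j)) h1
  have hAij : ∀ i j : Fin n, A i j ≤ ((p i - p j : ℝ) : WithBot ℝ) := by
    intro i j
    cases hb : A i j with
    | bot => exact bot_le
    | coe a =>
      have := hAp i j
      rw [hb, ← WithBot.coe_add, WithBot.coe_le_coe] at this
      exact WithBot.coe_le_coe.mpr (by linarith)
  constructor
  · intro ℓ c hc
    obtain ⟨hℓ, hcc, hedge⟩ := hc
    have hsum : circuitWeight A ℓ c ≤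
        ∑ k ∈ Finset.range ℓ, ((p (c k) - p (c (k+1)) : ℝ) : WithBot ℝ) := by
      exact Finset.sum_le_sum fun k _ => hAij (c k) (c (k+1))
    have htel : ∑ k ∈ Finset.range ℓ, ((p (c k) - p (c (k+1)) : ℝ) : WithBot ℝ)
        = (((p (c 0) - p (c ℓ)) : ℝ) : WithBot ℝ) := by
      rw [← Finset.sum_range_sub' (fun k => p (c k)) ℓ]
      push_cast
      rfl
    rw [htel, hcc] at hsum
    simpa using hsum
  · intro lam hlam
    obtain ⟨x, hx0, hx⟩ := hlam
    cases isEmpty_or_nonempty (Fin n) with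
    | inl he => exact absurd (funext fun i => (he.false i).elim) hx0
    | inr hne =>
      set y : Fin n → WithBot ℝ := fun j => x j + ((-(p j) : ℝ) : WithBot ℝ) with hy
      obtain ⟨js, -, hjs⟩ := Finset.exists_mem_eq_sup Finset.univ Finset.univ_nonempty y
      -- some x j0 ≠ ⊥
      have hex : ∃ j0, x j0 ≠ ⊥ := by
        by_contra hc
        push_neg at hc
        exact hx0 (funext fun i => hc i)
      obtain ⟨j0, hj0⟩ := hex
      have hyj0 : y j0 ≠ ⊥ := by
        simp only [hy]
        exact WithBot.add_ne_bot.mpr ⟨hj0, WithBot.coe_ne_bot⟩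
      have hyjs : y js ≠ ⊥ := by
        intro hb
        have : y j0 ≤ y js := hjs ▸ Finset.le_sup (Finset.mem_univ j0)
        rw [hb, le_bot_iff] at this
        exact hyj0 this
      have hxy : ∀ j, x j = ((p j : ℝ) : WithBot ℝ) + y j := by
        intro j
        simp only [hy]
        rw [add_comm (x j), ← add_assoc, ← WithBot.coe_add]
        simp
      -- eigen equation at js
      have heq := hx js
      have hle : tdot (A js) x ≤ ((p js : ℝ) : WithBot ℝ) + y js := by
        apply Finset.sup_le
        intro j _
        calc A js j + x j = (A js j + ((p j : ℝ) : WithBot ℝ)) + y j := by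
              rw [hxy j, add_assoc]
          _ ≤ ((p js : ℝ) : WithBot ℝ) + y j := add_le_add_left (hAp js j) _
          _ ≤ ((p js : ℝ) : WithBot ℝ) + y js := by
              apply add_le_add_right
              exact hjs ▸ Finset.le_sup (Finset.mem_univ j)
      rw [heq, hxy js] at hle
      obtain ⟨cst, hcst⟩ := WithBot.ne_bot_iff_exists.mp hyjs
      rw [← hcst, ← WithBot.coe_add, ← WithBot.coe_add] at hle
      have := WithBot.coe_le_coe.mp hle
      linarith
end
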